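/- Let K ⊂ Γ be compact, β ∈ (0, 1/√m] and M > 0. Then there exist constants c₀ > 0 and C₀ > 0, depending only on m, f, K, β and M, such that for every λ ∈ Γ with |λ_m| ≤ M and f_i(λ) ≥ β ∑_{j=1}^m f_j(λ) for every i = 1,…,m, every μ ∈ K with f(μ) ≥ f(λ), and every index r ∈ {1,…,m−1}: ∑_{1 ≤ i ≤ m−1, i ≠ r} f_i(λ)λ_i² ≥ c₀ ∑_{i=1}^{m−1} f_i(λ)λ_i² − C₀ ∑_{i=1}^m f_i(λ). -/

import Mathlib

open Filter Topology

/-- The `i`-th partial derivative `fᵢ(x) = ∂f/∂λᵢ(x)`. -/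
noncomputable def pd {m : ℕ} (f : (Fin m → ℝ) → ℝ) (x : Fin m → ℝ) (i : Fin m) : ℝ :=
  fderiv ℝ f x (Pi.single i 1)

/-- The Euclidean norm of a vector in `ℝ^m`. -/
noncomputable def eNorm {m : ℕ} (v : Fin m → ℝ) : ℝ :=
  Real.sqrt (∑ i, (v i) ^ 2)

/-- The unit normal `ν_x = Df(x)/|Df(x)|`. -/
noncomputable def nuv {m : ℕ} (f : (Fin m → ℝ) → ℝ) (x : Fin m → ℝ) : Fin m → ℝ :=
  fun i => pd f x i / eNorm (pd f x)

/-! A proper open symmetric convex cone containing the positive cone lies in the half-space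
`∑ λᵢ > 0`: otherwise averaging the cyclic shifts of a point puts a nonpositive multiple of
`(1, …, 1)` into `Γ`, hence `0 ∈ Γ`, and an open cone through `0` is everything.
Concavity gives `∑ fᵢ(λ) λᵢ ≤ ∑ fᵢ(λ) μᵢ ≤ R ∑ fᵢ(λ)` for a bound `R` of `K`. With `|λ_m| ≤ M`
and `fᵢ ≥ β ∑ fⱼ` this bounds `β |λ_r|` by `R + M + ∑_{i ≠ r, m} |λᵢ|`; squaring and
Cauchy–Schwarz give `β³ f_r λ_r² ≤ 2m ∑_{i ≠ r, m} fᵢ λᵢ² + 2 (R + M)² β ∑ fⱼ`, which is the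
claim with `c₀ = β³ / (β³ + 2m)`. -/

open Finset

section Cone

variable {E : Type*} [AddCommGroup E] [Module ℝ E] {Γ : Set E}

lemma Convex.zero_mem_of_smul_mem (hconv : Convex ℝ Γ) {v : E} {s : ℝ} (hv : v ∈ Γ)
    (hsv : s • v ∈ Γ) (hs : s ≤ 0) : (0 : E) ∈ Γ := by
  have h1s : 0 < 1 - s := by linarith
  have h := hconv hv hsv (a := -s / (1 - s)) (b := 1 / (1 - s)) (by bound) (by positivity)
    (by field_simp; ring)
  rwa [smul_smul, ← add_smul, show -s / (1 - s) + 1 / (1 - s) * s = 0 by ring, zero_smul] at h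

lemma IsOpen.eq_univ_of_zero_mem [TopologicalSpace E] [ContinuousSMul ℝ E] (hopen : IsOpen Γ)
    (hcone : ∀ t : ℝ, 0 < t → ∀ x ∈ Γ, t • x ∈ Γ) (h0 : (0 : E) ∈ Γ) : Γ = Set.univ := by
  refine Set.eq_univ_of_forall fun x => ?_
  have hnear : ∀ᶠ t in 𝓝 (0 : ℝ), t • x ∈ Γ :=
    (continuous_id.smul continuous_const).continuousAt.eventually_mem
      (by simpa using hopen.mem_nhds h0)
  obtain ⟨t, htx, ht⟩ := ((hnear.filter_mono nhdsWithin_le_nhds).and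
    (self_mem_nhdsWithin : Set.Ioi (0 : ℝ) ∈ 𝓝[>] 0)).exists
  simpa [smul_smul, inv_mul_cancel₀ (ne_of_gt ht)] using hcone t⁻¹ (inv_pos.2 ht) _ htx

end Cone

section SymmetricCone

variable {m : ℕ} [NeZero m] {Γ : Set (Fin m → ℝ)}

lemma Convex.mean_smul_one_mem (hconv : Convex ℝ Γ)
    (hperm : ∀ π : Equiv.Perm (Fin m), ∀ x ∈ Γ, x ∘ π ∈ Γ) {x : Fin m → ℝ} (hx : x ∈ Γ) :
    ((∑ i, x i) / m) • (1 : Fin m → ℝ) ∈ Γ := by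
  have h := hconv.sum_mem (t := univ) (w := fun _ => (m : ℝ)⁻¹)
    (z := fun k => x ∘ Equiv.addRight k) (fun _ _ => by positivity)
    (by simp) (fun k _ => hperm _ _ hx)
  convert h using 1
  ext i
  have hshift : ∑ k, x (i + k) = ∑ k, x k := Equiv.sum_comp (Equiv.addLeft i) x
  simp [Finset.sum_apply, ← mul_sum, hshift, div_eq_inv_mul]

lemma sum_pos_of_mem_proper_cone (hopen : IsOpen Γ) (hconv : Convex ℝ Γ)
    (hproper : Γ ≠ Set.univ) (hcone : ∀ t : ℝ, 0 < t → ∀ x ∈ Γ, t • x ∈ Γ)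
    (hperm : ∀ π : Equiv.Perm (Fin m), ∀ x ∈ Γ, x ∘ π ∈ Γ)
    (h1 : (1 : Fin m → ℝ) ∈ Γ) {x : Fin m → ℝ} (hx : x ∈ Γ) :
    0 < ∑ i, x i := by
  by_contra! hx0
  have h0 := hconv.zero_mem_of_smul_mem h1 (hconv.mean_smul_one_mem hperm hx)
    (div_nonpos_of_nonpos_of_nonneg hx0 m.cast_nonneg)
  exact hproper (hopen.eq_univ_of_zero_mem hcone h0)

end SymmetricCone

lemma ConcaveOn.le_add_of_hasFDerivAt {E : Type*} [NormedAddCommGroup E] [NormedSpace ℝ E]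
    {s : Set E} {f : E → ℝ} {f' : E →L[ℝ] ℝ} {x y : E} (hf : ConcaveOn ℝ s f) (hx : x ∈ s)
    (hy : y ∈ s) (hf' : HasFDerivAt f f' x) : f y ≤ f x + f' (y - x) := by
  let g : ℝ →ᵃ[ℝ] E := AffineMap.lineMap x y
  have hline : HasDerivAt (f ∘ g) (f' (y - x)) 0 :=
    (by simpa [g] using hf' : HasFDerivAt f f' (g 0)).comp_hasDerivAt 0
      AffineMap.hasDerivAt_lineMap
  have h := (hf.comp_affineMap g).slope_le_of_hasDerivAt
    (by simpa [g] using hx) (by simpa [g] using hy) one_pos hline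
  simp only [slope_def_field, Function.comp_apply, g, AffineMap.lineMap_apply_one,
    AffineMap.lineMap_apply_zero, sub_zero, div_one] at h
  linarith

lemma fderiv_apply_eq_sum_pd {m : ℕ} (f : (Fin m → ℝ) → ℝ) (x v : Fin m → ℝ) :
    fderiv ℝ f x v = ∑ i, v i * pd f x i := by
  conv_lhs => rw [pi_eq_sum_univ' v]
  simp [map_sum, pd]

lemma sum_pd_mul_le_of_le {m : ℕ} {Γ : Set (Fin m → ℝ)} {f : (Fin m → ℝ) → ℝ}
    (hf : ConcaveOn ℝ Γ f) {lam μ : Fin m → ℝ} (hlam : lam ∈ Γ) (hμ : μ ∈ Γ)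
    (hdiff : DifferentiableAt ℝ f lam) (hle : f lam ≤ f μ) :
    ∑ i, pd f lam i * lam i ≤ ∑ i, pd f lam i * μ i := by
  have h := hf.le_add_of_hasFDerivAt hlam hμ hdiff.hasFDerivAt
  simp only [fderiv_apply_eq_sum_pd, Pi.sub_apply, sub_mul, sum_sub_distrib] at h
  simp only [mul_comm (pd f lam _)]
  linarith

section Estimate

variable {ι : Type*} [Fintype ι] [DecidableEq ι] {F lam : ι → ℝ} {β R M : ℝ} {r l : ι}

lemma sum_eq_add_add_sum_erase_erase (hrl : r ≠ l) (g : ι → ℝ) :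
    ∑ i, g i = g l + g r + ∑ i ∈ (univ.erase l).erase r, g i := by
  rw [← add_sum_erase _ _ (mem_univ l), ← add_sum_erase _ _ (mem_erase.2 ⟨hrl, mem_univ r⟩)]
  ring

lemma mul_abs_le_of_sum_mul_le (hF : ∀ i, 0 < F i) (hβ1 : β ≤ 1) (hR : 0 ≤ R)
    (hβF : β * ∑ i, F i ≤ F r) (hrl : r ≠ l) (hl : |lam l| ≤ M) (hsum : 0 < ∑ i, lam i)
    (hFlam : ∑ i, F i * lam i ≤ R * ∑ i, F i) :
    β * |lam r| ≤ R + M + ∑ i ∈ (univ.erase l).erase r, |lam i| := by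
  set T := ∑ i, F i
  set σ := ∑ i ∈ (univ.erase l).erase r, |lam i|
  have hT : 0 < T := sum_pos (fun i _ => hF i) ⟨r, mem_univ r⟩
  have hFT : ∀ i, F i ≤ T := fun i => single_le_sum (fun j _ => (hF j).le) (mem_univ i)
  have hlM := abs_le.1 hl
  rcases le_or_gt 0 (lam r) with hr | hr
  · have hrest : -(T * σ) ≤ ∑ i ∈ (univ.erase l).erase r, F i * lam i := by
      rw [mul_sum, ← sum_neg_distrib]
      exact sum_le_sum fun i _ => by
        nlinarith [neg_abs_le (lam i), abs_nonneg (lam i), hFT i, hF i]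
    have hlast : -(T * M) ≤ F l * lam l := by nlinarith [hFT l, hF l]
    have hFr : F r * lam r ≤ T * (R + M + σ) := by
      rw [sum_eq_add_add_sum_erase_erase hrl] at hFlam
      linarith
    rw [abs_of_nonneg hr]
    refine le_of_mul_le_mul_right ?_ hT
    nlinarith [mul_le_mul_of_nonneg_right hβF hr]
  · have hrest : ∑ i ∈ (univ.erase l).erase r, lam i ≤ σ := sum_le_sum fun i _ => le_abs_self _
    rw [sum_eq_add_add_sum_erase_erase hrl] at hsum
    rw [abs_of_neg hr]
    nlinarith

lemma sq_mul_sq_le_of_sum_mul_le (hF : ∀ i, 0 < F i) (hβ : 0 < β) (hβ1 : β ≤ 1) (hR : 0 ≤ R)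
    (hβF : β * ∑ i, F i ≤ F r) (hrl : r ≠ l) (hl : |lam l| ≤ M) (hsum : 0 < ∑ i, lam i)
    (hFlam : ∑ i, F i * lam i ≤ R * ∑ i, F i) :
    β ^ 2 * lam r ^ 2 ≤
      2 * (R + M) ^ 2 + 2 * Fintype.card ι * ∑ i ∈ (univ.erase l).erase r, lam i ^ 2 := by
  set Q := (univ.erase l).erase r
  set σ := ∑ i ∈ Q, |lam i|
  have hCS : σ ^ 2 ≤ Fintype.card ι * ∑ i ∈ Q, lam i ^ 2 := by
    refine sq_sum_le_card_mul_sum_sq.trans ?_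
    simp_rw [sq_abs]
    gcongr
    exact card_le_univ Q
  calc β ^ 2 * lam r ^ 2 = (β * |lam r|) ^ 2 := by rw [mul_pow, sq_abs]
    _ ≤ (R + M + σ) ^ 2 := by
        gcongr
        exact mul_abs_le_of_sum_mul_le hF hβ1 hR hβF hrl hl hsum hFlam
    _ ≤ 2 * (R + M) ^ 2 + 2 * σ ^ 2 := by nlinarith [sq_nonneg (R + M - σ)]
    _ ≤ _ := by linarith

lemma sum_erase_erase_ge (hF : ∀ i, 0 < F i) (hβ : 0 < β) (hβ1 : β ≤ 1) (hR : 0 ≤ R)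
    (hβF : ∀ i, β * ∑ j, F j ≤ F i) (hrl : r ≠ l) (hl : |lam l| ≤ M) (hsum : 0 < ∑ i, lam i)
    (hFlam : ∑ i, F i * lam i ≤ R * ∑ i, F i) :
    β ^ 3 / (β ^ 3 + 2 * Fintype.card ι) * ∑ i ∈ univ.erase l, F i * lam i ^ 2
        - 2 * (R + M) ^ 2 * β / (β ^ 3 + 2 * Fintype.card ι) * ∑ i, F i
      ≤ ∑ i ∈ (univ.erase l).erase r, F i * lam i ^ 2 := by
  set n : ℝ := (Fintype.card ι : ℝ)
  set T := ∑ i, F i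
  set A := ∑ i ∈ (univ.erase l).erase r, F i * lam i ^ 2
  set A' := ∑ i ∈ (univ.erase l).erase r, lam i ^ 2
  have hT : 0 < T := sum_pos (fun i _ => hF i) ⟨r, mem_univ r⟩
  have hFT : F r ≤ T := single_le_sum (fun j _ => (hF j).le) (mem_univ r)
  have hAA' : β * T * A' ≤ A := by
    rw [mul_sum]
    exact sum_le_sum fun i _ => mul_le_mul_of_nonneg_right (hβF i) (sq_nonneg _)
  have hsq := sq_mul_sq_le_of_sum_mul_le hF hβ hβ1 hR (hβF r) hrl hl hsum hFlam
  have hkey : β ^ 3 * (F r * lam r ^ 2) ≤ 2 * n * A + 2 * (R + M) ^ 2 * β * T :=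
    calc β ^ 3 * (F r * lam r ^ 2) ≤ β * T * (β ^ 2 * lam r ^ 2) := by
          have := mul_le_mul_of_nonneg_left hFT (by positivity : 0 ≤ β ^ 3 * lam r ^ 2)
          linarith
      _ ≤ β * T * (2 * (R + M) ^ 2 + 2 * n * A') := by gcongr
      _ = 2 * n * (β * T * A') + 2 * (R + M) ^ 2 * β * T := by ring
      _ ≤ 2 * n * A + 2 * (R + M) ^ 2 * β * T := by gcongr
  have hD : 0 < β ^ 3 + 2 * n := by positivity
  rw [← add_sum_erase _ _ (mem_erase.2 ⟨hrl, mem_univ r⟩), div_mul_eq_mul_div,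
    div_mul_eq_mul_div, ← sub_div, div_le_iff₀ hD]
  linarith

end Estimate

/-- inequality (6.8): for compact `K ⊂ Γ`, `β ∈ (0, 1/√m]` and `M > 0`
there are `c₀, C₀ > 0` such that for all `λ ∈ Γ` with `|λ_m| ≤ M` and
`fᵢ(λ) ≥ β ∑ⱼ fⱼ(λ)` for every `i`, all `μ ∈ K` with `f(μ) ≥ f(λ)`, and any index
`r ∈ {1,…,m-1}`: `∑_{i<m, i≠r} fᵢλᵢ² ≥ c₀ ∑_{i<m} fᵢλᵢ² - C₀ ∑ᵢ fᵢ`. -/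
theorem stmt_6 (m : ℕ) (hm : 2 ≤ m)
    (Γ : Set (Fin m → ℝ)) (f : (Fin m → ℝ) → ℝ)
    (hΓopen : IsOpen Γ) (hΓconv : Convex ℝ Γ)
    (hΓproper : Γ ≠ Set.univ)
    (hΓcone : ∀ t : ℝ, 0 < t → ∀ x ∈ Γ, t • x ∈ Γ)
    (hΓperm : ∀ π : Equiv.Perm (Fin m), ∀ x ∈ Γ, x ∘ π ∈ Γ)
    (hΓpos : {x : Fin m → ℝ | ∀ i, 0 < x i} ⊆ Γ)
    (hfsmooth : ContDiffOn ℝ (⊤ : ℕ∞) f Γ)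
    (hf1 : ∀ x ∈ Γ, ∀ i, 0 < pd f x i)
    (hf2 : ConcaveOn ℝ Γ f)
    (K : Set (Fin m → ℝ)) (hK : IsCompact K) (hKΓ : K ⊆ Γ)
    (β : ℝ) (hβ : 0 < β) (hβ' : β ≤ 1 / Real.sqrt m)
    (M : ℝ) (hM : 0 < M) :
    ∃ c₀ : ℝ, 0 < c₀ ∧ ∃ C₀ : ℝ, 0 < C₀ ∧
      ∀ lam ∈ Γ, |lam (⟨m - 1, by omega⟩ : Fin m)| ≤ M →
      (∀ i, β * ∑ j, pd f lam j ≤ pd f lam i) →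
      ∀ μ ∈ K, f lam ≤ f μ →
      ∀ r : Fin m, (r : ℕ) < m - 1 →
      ∑ i ∈ Finset.univ.filter (fun i : Fin m => (i : ℕ) < m - 1 ∧ i ≠ r),
            pd f lam i * (lam i) ^ 2
        ≥ c₀ * ∑ i ∈ Finset.univ.filter (fun i : Fin m => (i : ℕ) < m - 1),
              pd f lam i * (lam i) ^ 2
          - C₀ * ∑ i, pd f lam i := by
  have : NeZero m := ⟨by omega⟩
  obtain ⟨R, hR, hRK⟩ := hK.isBounded.exists_pos_norm_le
  have hβ1 : β ≤ 1 := hβ'.trans <| by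
    rw [div_le_one (by positivity), Real.one_le_sqrt]
    exact_mod_cast (by omega : 1 ≤ m)
  refine ⟨β ^ 3 / (β ^ 3 + 2 * m), by positivity, 2 * (R + M) ^ 2 * β / (β ^ 3 + 2 * m),
    by positivity, fun lam hlam hlamM hβF μ hμ hfμ r hr => ?_⟩
  set last : Fin m := ⟨m - 1, by omega⟩
  have hrl : r ≠ last := fun h => by simp [h, last] at hr
  have hbelow : univ.filter (fun i : Fin m => (i : ℕ) < m - 1) = univ.erase last := by
    ext i
    simp only [mem_filter, mem_univ, true_and, mem_erase, ne_eq, Fin.ext_iff, and_true, last]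
    omega
  have hbelow_ne : univ.filter (fun i : Fin m => (i : ℕ) < m - 1 ∧ i ≠ r) =
      (univ.erase last).erase r := by
    ext i
    simp only [mem_filter, mem_univ, true_and, mem_erase, ne_eq, Fin.ext_iff, and_true, last]
    omega
  have hdiff : DifferentiableAt ℝ f lam :=
    (hfsmooth.contDiffAt (hΓopen.mem_nhds hlam)).differentiableAt (by simp)
  have hFlam : ∑ i, pd f lam i * lam i ≤ R * ∑ i, pd f lam i :=
    calc ∑ i, pd f lam i * lam i ≤ ∑ i, pd f lam i * μ i :=
          sum_pd_mul_le_of_le hf2 hlam (hKΓ hμ) hdiff hfμ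
      _ ≤ ∑ i, pd f lam i * R := sum_le_sum fun i _ => mul_le_mul_of_nonneg_left
          ((Real.le_norm_self _).trans ((norm_le_pi_norm μ i).trans (hRK μ hμ)))
          (hf1 lam hlam i).le
      _ = R * ∑ i, pd f lam i := by rw [← sum_mul, mul_comm]
  have h := sum_erase_erase_ge (hf1 lam hlam) hβ hβ1 hR.le hβF hrl hlamM
    (sum_pos_of_mem_proper_cone hΓopen hΓconv hΓproper hΓcone hΓperm
      (hΓpos fun _ => one_pos) hlam) hFlam
  rw [Fintype.card_fin] at h
  rwa [hbelow, hbelow_ne, ge_iff_le]
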